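/- arXiv:1202.0571 — 7 statements merged into one kernel-verified Lean document; each statement's English description precedes it below -/
import Mathlib

section
/- Let F₂ = ⟨a, b⟩, let k, n be positive integers, and let H be the kernel of the homomorphism F₂ → Z/(kn) sending a ↦ n, b ↦ 1. Then the elements bᵗ for t = 0, 1, …, n−1 form a complete set of representatives of the double cosets ⟨aᵏbⁿ⟩\F₂/H; in particular there are exactly n such double cosets. -/
/-!
The homomorphism `f : F₂ → ℤ/(kn)` sends `w = aᵏbⁿ` to `kn + n = n` and `b` to `1`, and `H = ker f`,
so `x ∈ ⟨w⟩ bᵗ H` exactly when `f x = j n + t` for some integer `j`, i.e. when `t ≡ f x (mod n)`.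
The double coset of `x` is thus determined by the residue of `f x` modulo `n`, and `bᵗ`,
`0 ≤ t < n`, realise each residue once.
-/

theorem MonoidHom.exists_mem_ker_eq_mul_iff {G M : Type*} [Group G] [Group M] (f : G →* M)
    (g x : G) : (∃ h ∈ f.ker, x = g * h) ↔ f x = f g := by
  refine ⟨?_, fun hx => ⟨g⁻¹ * x, ?_, by group⟩⟩
  · rintro ⟨h, hh, rfl⟩
    rw [map_mul, hh, mul_one]
  · rw [MonoidHom.mem_ker, map_mul, map_inv, hx, inv_mul_cancel]

theorem ZMod.exists_eq_intCast_mul_add_iff {m n : ℕ} (hnm : n ∣ m) (c : ZMod m) (t : ℕ) :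
    (∃ j : ℤ, c = j * n + t) ↔ (t : ZMod n) = ZMod.castHom hnm (ZMod n) c := by
  rw [eq_comm]
  constructor
  · rintro ⟨j, rfl⟩
    rw [map_add, map_mul, map_intCast, map_natCast, map_natCast, ZMod.natCast_self, mul_zero,
      zero_add]
  · obtain ⟨z, rfl⟩ := ZMod.intCast_surjective c
    rw [map_intCast, ← Int.cast_natCast, ZMod.intCast_eq_intCast_iff_dvd_sub]
    rintro ⟨j, hj⟩
    refine ⟨-j, ?_⟩
    rw [show z = -j * n + t by linarith]
    push_cast; ring

theorem ZMod.existsUnique_fin_natCast_eq {n : ℕ} [NeZero n] (y : ZMod n) :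
    ∃! t : Fin n, ((t : ℕ) : ZMod n) = y :=
  ⟨⟨y.val, y.val_lt⟩, y.natCast_zmod_val, fun t ht => Fin.ext <| by
    simp only [← ht, ZMod.val_cast_of_lt t.isLt]⟩

theorem ZMod.existsUnique_fin_eq_intCast_mul_add {m n : ℕ} [NeZero n] (hnm : n ∣ m)
    (c : ZMod m) : ∃! t : Fin n, ∃ j : ℤ, c = j * n + (t : ℕ) := by
  simp only [ZMod.exists_eq_intCast_mul_add_iff hnm]
  exact ZMod.existsUnique_fin_natCast_eq (ZMod.castHom hnm (ZMod n) c)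

theorem DoubleCoset.card_quotient_eq_of_existsUnique {G ι : Type*} [Group G] (K H : Subgroup G)
    (r : ι → G) (hr : ∀ x, ∃! t, ∃ k ∈ K, ∃ h ∈ H, x = k * r t * h) :
    Nat.card (DoubleCoset.Quotient (K : Set G) H) = Nat.card ι := by
  refine (Nat.card_eq_of_bijective (fun t => DoubleCoset.mk K H (r t)) ⟨?_, ?_⟩).symm
  · intro t t' htt'
    obtain ⟨k, hk, h, hh, ht⟩ := (DoubleCoset.eq _ _ _ _).mp htt'
    exact (hr (r t')).unique ⟨k, hk, h, hh, ht⟩ ⟨1, K.one_mem, 1, H.one_mem, by group⟩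
  · rintro ⟨x⟩
    obtain ⟨t, ⟨k, hk, h, hh, hx⟩, -⟩ := hr x
    exact ⟨t, (DoubleCoset.eq _ _ _ _).mpr ⟨k, hk, h, hh, hx⟩⟩

theorem stmt4_general (k n : ℕ) (hn : 0 < n)
    (a b : FreeGroup (Fin 2)) (ha : a = FreeGroup.of 0) (hb : b = FreeGroup.of 1)
    (f : FreeGroup (Fin 2) →* Multiplicative (ZMod (k * n)))
    (hf : f = FreeGroup.lift (fun i : Fin 2 =>
      if i = 0 then Multiplicative.ofAdd ((n : ZMod (k * n)))
      else Multiplicative.ofAdd ((1 : ZMod (k * n)))))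
    (H : Subgroup (FreeGroup (Fin 2))) (hH : H = f.ker)
    (w : FreeGroup (Fin 2)) (hw : w = a ^ k * b ^ n) :
    (∀ x : FreeGroup (Fin 2), ∃! t : Fin n,
        ∃ j : ℤ, ∃ h ∈ H, x = w ^ j * b ^ (t : ℕ) * h) ∧
    Nat.card (DoubleCoset.Quotient (Subgroup.zpowers w : Set (FreeGroup (Fin 2)))
      (H : Set (FreeGroup (Fin 2)))) = n := by
  have : NeZero n := ⟨hn.ne'⟩
  have hfb : f b = Multiplicative.ofAdd 1 := by simp [hf, hb]
  have hfw : f w = Multiplicative.ofAdd (n : ZMod (k * n)) := by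
    simp [hf, hw, ha, hb, ← ofAdd_nsmul, ← Nat.cast_mul]
  have hreps : ∀ x, ∃! t : Fin n, ∃ j : ℤ, ∃ h ∈ H, x = w ^ j * b ^ (t : ℕ) * h := by
    intro x
    simp only [hH, MonoidHom.exists_mem_ker_eq_mul_iff, map_mul, map_zpow, map_pow, hfb, hfw,
      ← ofAdd_zsmul, ← ofAdd_nsmul, ← ofAdd_add, zsmul_eq_mul, nsmul_eq_mul, mul_one]
    -- `f x = ofAdd c` and `toAdd (f x) = c` agree definitionally.
    exact ZMod.existsUnique_fin_eq_intCast_mul_add (dvd_mul_left n k) (f x).toAdd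
  refine ⟨hreps, ?_⟩
  rw [DoubleCoset.card_quotient_eq_of_existsUnique _ H (fun t : Fin n => b ^ (t : ℕ)),
    Nat.card_eq_fintype_card, Fintype.card_fin]
  simpa only [Subgroup.exists_mem_zpowers] using hreps

/-- With `H = ker(F₂ → ℤ/(kn), a ↦ n, b ↦ 1)` and `w = a^k b^n`, the elements
`b^t`, `t = 0, …, n-1`, form a complete set of representatives of the double cosets
`⟨w⟩\F₂/H`; in particular there are exactly `n` double cosets. -/
theorem stmt4 (k n : ℕ) (hk : 0 < k) (hn : 0 < n)
    (a b : FreeGroup (Fin 2)) (ha : a = FreeGroup.of 0) (hb : b = FreeGroup.of 1)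
    (f : FreeGroup (Fin 2) →* Multiplicative (ZMod (k * n)))
    (hf : f = FreeGroup.lift (fun i : Fin 2 =>
      if i = 0 then Multiplicative.ofAdd ((n : ZMod (k * n)))
      else Multiplicative.ofAdd ((1 : ZMod (k * n)))))
    (H : Subgroup (FreeGroup (Fin 2))) (hH : H = f.ker)
    (w : FreeGroup (Fin 2)) (hw : w = a ^ k * b ^ n) :
    (∀ x : FreeGroup (Fin 2), ∃! t : Fin n,
        ∃ j : ℤ, ∃ h ∈ H, x = w ^ j * b ^ (t : ℕ) * h) ∧
    Nat.card (DoubleCoset.Quotient (Subgroup.zpowers w : Set (FreeGroup (Fin 2)))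
      (H : Set (FreeGroup (Fin 2)))) = n :=
  stmt4_general k n hn a b ha hb f hf H hH w hw
end

section
/- In the free group F₂ = ⟨a, b⟩, for any nonzero integers k and n, the element w = aᵏbⁿ is not a proper power; that is, if w = uᵐ for some u ∈ F₂ and integer m ≥ 1, then m = 1. -/
/-!
Map `F₂` to the affine group of `ℂ` by sending `a` to `z ↦ ζ z`, with `ζ` a primitive `|k|`-th
root of unity, and `b` to `z ↦ z + 1`. Then `aᵏbⁿ` becomes the translation by `n ≠ 0`, so the image
of `u`, an `m`-th root of it, commutes with a nontrivial translation and its linear part `ζ^e` is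
trivial, where `e` is the exponent sum of `a` in `u`. Hence `k ∣ e`, while abelianizing gives
`k = m e`; so `m = 1`.
-/

namespace AffineEquiv

variable {k V P : Type*} [Ring k] [AddCommGroup V] [Module k V] [AddTorsor V P]

theorem linear_apply_eq_self_of_commute_constVAdd {f : P ≃ᵃ[k] P} {v : V}
    (h : Commute f (constVAdd k P v)) : f.linear v = v := by
  obtain ⟨p⟩ : Nonempty P := inferInstance
  have hp : f (v +ᵥ p) = v +ᵥ f p := congrArg (· p) h.eq
  rw [map_vadd] at hp
  exact vadd_right_cancel _ hp

@[simp]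
theorem linear_homothetyUnitsMulHom {R : Type*} [CommRing R] [Module R V] (p : P) (t : Rˣ) :
    (homothetyUnitsMulHom p t).linear = DistribMulAction.toModuleAut R V t := by
  ext v
  change (AffineMap.homothety p (t : R)).linear v = _
  simp [AffineMap.homothety_linear, Units.smul_def]

end AffineEquiv

namespace FreeGroup

variable {α : Type*} [DecidableEq α]

def exponentSum (i : α) : FreeGroup α →* Multiplicative ℤ :=
  lift (Pi.mulSingle i (Multiplicative.ofAdd 1))

end FreeGroup

open FreeGroup Multiplicative

section AffineRepresentation

variable {K : Type*} [Field K]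

def affineRep (ζ : Kˣ) : FreeGroup (Fin 2) →* K ≃ᵃ[K] K :=
  lift ![AffineEquiv.homothetyUnitsMulHom 0 ζ, AffineEquiv.constVAdd K K 1]

theorem linear_affineRep (ζ : Kˣ) (u : FreeGroup (Fin 2)) :
    (affineRep ζ u).linear = DistribMulAction.toModuleAut K K (ζ ^ toAdd (exponentSum 0 u)) := by
  suffices AffineEquiv.linearHom.comp (affineRep ζ) =
      (DistribMulAction.toModuleAut K K).comp ((zpowersHom Kˣ ζ).comp (exponentSum 0)) from
    DFunLike.congr_fun this u
  refine ext_hom _ _ fun i => ?_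
  fin_cases i <;> ext <;> simp [affineRep, exponentSum]

theorem zpow_exponentSum_eq_one_of_pow_eq [CharZero K] {ζ : Kˣ} {k n : ℤ} (hk : ζ ^ k = 1)
    (hn : n ≠ 0) {u : FreeGroup (Fin 2)} {m : ℕ} (h : of 0 ^ k * of 1 ^ n = u ^ m) :
    ζ ^ toAdd (exponentSum 0 u) = 1 := by
  have hpow : affineRep ζ u ^ m = AffineEquiv.constVAdd K K (n : K) := by
    rw [← map_pow, ← h, map_mul (affineRep ζ), map_zpow, map_zpow]
    simp [affineRep, ← map_zpow, hk, ← AffineEquiv.constVAdd_zsmul]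
  have hfix := AffineEquiv.linear_apply_eq_self_of_commute_constVAdd
    (hpow ▸ Commute.self_pow (affineRep ζ u) m)
  rw [linear_affineRep, DistribMulAction.toModuleAut_apply, DistribMulAction.toLinearEquiv_apply, Units.smul_def,
    smul_eq_mul, mul_eq_right₀ (Int.cast_ne_zero.mpr hn)] at hfix
  exact Units.val_eq_one.mp hfix

end AffineRepresentation

theorem dvd_exponentSum_of_pow_eq {k n : ℤ} (hk : k ≠ 0) (hn : n ≠ 0) {u : FreeGroup (Fin 2)}
    {m : ℕ} (h : of 0 ^ k * of 1 ^ n = u ^ m) : k ∣ toAdd (exponentSum 0 u) := by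
  have hζ := (Complex.isPrimitiveRoot_exp k.natAbs (Int.natAbs_ne_zero.mpr hk)).isUnit_unit
    (Int.natAbs_ne_zero.mpr hk)
  rw [← Int.natAbs_dvd, ← hζ.zpow_eq_one_iff_dvd]
  refine zpow_exponentSum_eq_one_of_pow_eq ?_ hn h
  rw [hζ.zpow_eq_one_iff_dvd]
  exact Int.natAbs_dvd.mpr dvd_rfl

theorem stmt5_general (k n : ℤ) (hk : k ≠ 0) (hn : n ≠ 0)
    (a b : FreeGroup (Fin 2)) (ha : a = FreeGroup.of 0) (hb : b = FreeGroup.of 1)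
    (u : FreeGroup (Fin 2)) (m : ℕ)
    (h : a ^ k * b ^ n = u ^ m) : m = 1 := by
  subst ha hb
  obtain ⟨t, ht⟩ := dvd_exponentSum_of_pow_eq hk hn h
  have hsum : k = m * toAdd (exponentSum 0 u) := by
    simpa [exponentSum, mul_comm] using congrArg (toAdd ∘ exponentSum 0) h
  have hmt : (m : ℤ) * t = 1 := mul_left_cancel₀ hk (by linear_combination -hsum - (m : ℤ) * ht)
  exact_mod_cast Int.eq_one_of_mul_eq_one_right (Int.natCast_nonneg m) hmt

/-- In `F₂ = ⟨a,b⟩`, for nonzero integers `k, n`, the element `a^k b^n` is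
not a proper power: if `a^k b^n = u^m` with `m ≥ 1` then `m = 1`. -/
theorem stmt5 (k n : ℤ) (hk : k ≠ 0) (hn : n ≠ 0)
    (a b : FreeGroup (Fin 2)) (ha : a = FreeGroup.of 0) (hb : b = FreeGroup.of 1)
    (u : FreeGroup (Fin 2)) (m : ℕ) (hm : 1 ≤ m)
    (h : a ^ k * b ^ n = u ^ m) : m = 1 :=
  stmt5_general k n hk hn a b ha hb u m h
end

section
/- Let F be the free group on generators x, y₁, …, y_k with k ≥ 1 and let m₁, …, m_k be integers. Then the element w = x·y₁x^{m₁}y₁⁻¹·y₂x^{m₂}y₂⁻¹⋯y_k x^{m_k}y_k⁻¹ is not a proper power in F. -/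
/-!
Map the free group to the lamplighter-type group `ℤ ≀ ℤ`, sending `x` to a single lamp of
weight `1` at the origin and every `yᵢ` to the unit translation. Each conjugate `yᵢ x^{mᵢ} yᵢ⁻¹`
then becomes a lamp away from the origin, so `w` goes to a configuration with trivial
translation and weight `1` at the origin. If `w = uᵖ`, the translation part of `u` is killed by
`p`, hence trivial since `ℤ` is torsion-free, and then the configuration of `uᵖ` is `p` times
that of `u`: its weight at the origin would be divisible by `p`. Both copies of `ℤ` are written
multiplicatively, so the origin is `1` and the unit translation is `ofAdd 1`.
-/

open Multiplicative

namespace RegularWreathProduct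

variable {D Q : Type*} [Group D] [Group Q]

def ofLeft : (Q → D) →* D ≀ᵣ Q where
  toFun f := ⟨f, 1⟩
  map_one' := rfl
  map_mul' f g := by ext <;> simp [mul_def]

@[simp] lemma left_ofLeft (f : Q → D) : (ofLeft f).left = f := rfl

@[simp] lemma right_ofLeft (f : Q → D) : (ofLeft f).right = 1 := rfl

lemma ofLeft_left {g : D ≀ᵣ Q} (h : g.right = 1) : ofLeft g.left = g := by
  ext <;> simp [h]

lemma inl_mul_ofLeft_mulSingle_mul_inv [DecidableEq Q] (q : Q) (d : D) :
    inl q * ofLeft (Pi.mulSingle 1 d) * (inl q)⁻¹ = ofLeft (Pi.mulSingle q d) := by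
  ext x <;> simp [mul_def, Pi.mulSingle_apply, inv_mul_eq_one, eq_comm]

lemma left_pow_eq_of_pow_eq_ofLeft [IsMulTorsionFree Q] {g : D ≀ᵣ Q} {n : ℕ} (hn : n ≠ 0)
    {f : Q → D} (h : g ^ n = ofLeft f) : g.left ^ n = f := by
  have hg : g.right = 1 := by
    rw [← pow_eq_one_iff_left hn, ← right_ofLeft f, ← h, ← rightHom_eq_right, map_pow]
  rw [← ofLeft_left hg, ← map_pow] at h
  exact congrArg left h

end RegularWreathProduct

lemma Multiplicative.pow_ne_ofAdd_one {p : ℕ} (hp : 2 ≤ p) (c : Multiplicative ℤ) :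
    c ^ p ≠ ofAdd 1 := by
  intro h
  have hc : (p : ℤ) * c.toAdd = 1 := by simpa using congrArg toAdd h
  have := Int.eq_one_of_mul_eq_one_right (by positivity) hc
  omega

open RegularWreathProduct in
theorem stmt6_general (k : ℕ) (m : Fin k → ℤ)
    (x : FreeGroup (Fin (k + 1))) (hx : x = FreeGroup.of 0)
    (y : Fin k → FreeGroup (Fin (k + 1))) (hy : ∀ i, y i = FreeGroup.of i.succ)
    (w : FreeGroup (Fin (k + 1)))
    (hw : w = x * ((List.finRange k).map (fun i => y i * x ^ (m i) * (y i)⁻¹)).prod) :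
    ∀ (u : FreeGroup (Fin (k + 1))) (p : ℕ), 2 ≤ p → w ≠ u ^ p := by
  intro u p hp hwu
  set a : Multiplicative ℤ := ofAdd 1
  let φ : FreeGroup (Fin (k + 1)) →* Multiplicative ℤ ≀ᵣ Multiplicative ℤ :=
    FreeGroup.lift (Fin.cases (ofLeft (Pi.mulSingle 1 a)) fun _ ↦ inl a)
  have hφx : φ x = ofLeft (Pi.mulSingle 1 a) := by rw [hx, FreeGroup.lift_apply_of]; rfl
  have hφy (i : Fin k) : φ (y i) = inl a := by rw [hy, FreeGroup.lift_apply_of]; rfl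
  have hφw : φ w = ofLeft (Pi.mulSingle 1 a *
      ((List.finRange k).map fun i ↦ Pi.mulSingle a (a ^ m i)).prod) := by
    rw [hw, map_mul, map_list_prod, List.map_map, map_mul, map_list_prod, List.map_map, hφx]
    congr 2
    refine List.map_congr_left fun i _ ↦ ?_
    rw [Function.comp_apply, map_mul, map_mul, map_inv, map_zpow, hφx, hφy, ← map_zpow,
      ← Pi.mulSingle_zpow, inl_mul_ofLeft_mulSingle_mul_inv, Function.comp_apply]
  have hpow : φ u ^ p = φ w := by rw [hwu, map_pow]
  rw [hφw] at hpow
  have hu := congrFun (left_pow_eq_of_pow_eq_ofLeft (by omega) hpow) 1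
  have ha : (1 : Multiplicative ℤ) ≠ a := by decide
  simp only [Pi.pow_apply, Pi.mul_apply, Pi.mulSingle_eq_same, Pi.list_prod_apply, List.map_map,
    Function.comp_def, Pi.mulSingle_eq_of_ne ha, List.map_const', List.prod_replicate, one_pow,
    mul_one] at hu
  exact pow_ne_ofAdd_one hp _ hu

/-- In the free group on `x, y₁, …, y_k` (`k ≥ 1`), the element
`w = x · y₁ x^{m₁} y₁⁻¹ ⋯ y_k x^{m_k} y_k⁻¹` is not a proper power. -/
theorem stmt6 (k : ℕ) (hk : 1 ≤ k) (m : Fin k → ℤ)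
    (x : FreeGroup (Fin (k + 1))) (hx : x = FreeGroup.of 0)
    (y : Fin k → FreeGroup (Fin (k + 1))) (hy : ∀ i, y i = FreeGroup.of i.succ)
    (w : FreeGroup (Fin (k + 1)))
    (hw : w = x * ((List.finRange k).map (fun i => y i * x ^ (m i) * (y i)⁻¹)).prod) :
    ∀ (u : FreeGroup (Fin (k + 1))) (p : ℕ), 2 ≤ p → w ≠ u ^ p :=
  stmt6_general k m x hx y hy w hw
end

section
/- Let F be the free group on generators a₁, …, a_g with g ≥ 1, let w = a₁²a₂²⋯a_g², and let H be the kernel of the homomorphism F → Z/2 sending each aᵢ to 1. Then H has index 2 in F, w ∈ H, and {w, a₁⁻¹wa₁} is a complete lift of w to H, i.e. 1 and a₁ represent the two double cosets ⟨w⟩\F/H and the minimal power of w conjugated into H by each representative is 1. -/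
/-- In the free group `F` on `a₁, …, a_g` (`g ≥ 1`), with
`w = a₁² ⋯ a_g²` and `H = ker (F → ℤ/2, aᵢ ↦ 1)`: `H` has index 2, `w ∈ H`, and `1, a₁`
represent the two double cosets `⟨w⟩\F/H`, with minimal lifting power `1` for each, so that
`{w, a₁⁻¹ w a₁}` is a complete lift of `w` to `H`. -/
theorem stmt9 (g : ℕ) (hg : 1 ≤ g)
    (w : FreeGroup (Fin g))
    (hw : w = ((List.finRange g).map (fun i => FreeGroup.of i * FreeGroup.of i)).prod)
    (f : FreeGroup (Fin g) →* Multiplicative (ZMod 2))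
    (hf : f = FreeGroup.lift (fun _ => Multiplicative.ofAdd (1 : ZMod 2)))
    (H : Subgroup (FreeGroup (Fin g))) (hH : H = f.ker)
    (a₁ : FreeGroup (Fin g)) (ha₁ : a₁ = FreeGroup.of ⟨0, hg⟩) :
    H.index = 2 ∧ w ∈ H ∧ a₁⁻¹ * w * a₁ ∈ H ∧
    (∀ x : FreeGroup (Fin g),
      (∃ j : ℤ, ∃ h ∈ H, x = w ^ j * h) ∨ (∃ j : ℤ, ∃ h ∈ H, x = w ^ j * a₁ * h)) ∧
    ¬ ∃ x : FreeGroup (Fin g),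
      (∃ j : ℤ, ∃ h ∈ H, x = w ^ j * h) ∧ (∃ j : ℤ, ∃ h ∈ H, x = w ^ j * a₁ * h) := by
  have hfo : ∀ i, f (FreeGroup.of i) = Multiplicative.ofAdd (1 : ZMod 2) := by
    intro i; simp [hf]
  have hfw : f w = 1 := by
    rw [hw, map_list_prod]
    apply List.prod_eq_one
    intro x hx
    simp only [List.map_map, List.mem_map, Function.comp] at hx
    obtain ⟨i, -, rfl⟩ := hx
    rw [map_mul, hfo]
    decide
  have hfa : f a₁ = Multiplicative.ofAdd (1 : ZMod 2) := by rw [ha₁, hfo]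
  have hxH : ∀ x, x ∈ H ↔ f x = 1 := by
    intro x; rw [hH]; exact Iff.rfl
  have hdich : ∀ y : Multiplicative (ZMod 2),
      y = 1 ∨ y = Multiplicative.ofAdd (1 : ZMod 2) := by decide
  have hne : (Multiplicative.ofAdd (1 : ZMod 2)) ≠ 1 := by decide
  -- values of f on the two coset types
  have hleft : ∀ x : FreeGroup (Fin g), (∃ j : ℤ, ∃ h ∈ H, x = w ^ j * h) → f x = 1 := by
    rintro x ⟨j, h, hh, rfl⟩
    rw [map_mul, map_zpow, hfw, (hxH h).1 hh, one_zpow, one_mul]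
  have hright : ∀ x : FreeGroup (Fin g), (∃ j : ℤ, ∃ h ∈ H, x = w ^ j * a₁ * h) →
      f x = Multiplicative.ofAdd (1 : ZMod 2) := by
    rintro x ⟨j, h, hh, rfl⟩
    rw [map_mul, map_mul, map_zpow, hfw, (hxH h).1 hh, one_zpow, one_mul, mul_one, hfa]
  refine ⟨?_, (hxH w).2 hfw, ?_, ?_, ?_⟩
  · rw [hH, Subgroup.index_ker]
    have hsurj : Function.Surjective f := by
      intro y
      rcases hdich y with rfl | rfl
      · exact ⟨1, map_one f⟩
      · exact ⟨a₁, hfa⟩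
    rw [MonoidHom.range_eq_top_of_surjective f hsurj]
    have : Nat.card (⊤ : Subgroup (Multiplicative (ZMod 2))) = Nat.card (Multiplicative (ZMod 2)) := Nat.card_congr Subgroup.topEquiv.toEquiv
    rw [this]
    simp [Nat.card_eq_fintype_card]
  · rw [hxH]
    rw [map_mul, map_mul, hfw, mul_one, map_inv, inv_mul_cancel]
  · intro x
    rcases hdich (f x) with hx | hx
    · exact Or.inl ⟨0, x, (hxH x).2 hx, by rw [zpow_zero, one_mul]⟩
    · refine Or.inr ⟨0, a₁⁻¹ * x, ?_, by group⟩
      rw [hxH, map_mul, map_inv, hfa, hx]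
      decide
  · rintro ⟨x, h1, h2⟩
    have := (hleft x h1).symm.trans (hright x h2)
    exact hne this.symm
end

section
/- Let K be a group, n ≥ 1, and let G = K ∗ (Z/n) be the free product, with s ∈ G the generator of the Z/n factor. Let H be the kernel of the retraction G → Z/n that kills K and sends s to 1. Then H has index n in G, H is generated by the conjugates Kⱼ = sʲKs⁻ʲ for j = 0, …, n−1, and the natural map K ∗ K ∗ ⋯ ∗ K (n factors) → H sending the j-th factor to Kⱼ is an isomorphism. -/
/-!
Let `Q` act on the free product `∗_{q ∈ Q} K` by permuting the factors through left
multiplication. Sending `K` to the factor indexed by `1` and `Q` to itself defines a map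
`K ∗ Q → (∗_{q ∈ Q} K) ⋊ Q`, and the map sending `k` in factor `q` to `q k q⁻¹` (and `Q` to
itself) is a left inverse of it. Under this map the retraction `K ∗ Q → Q` becomes the
projection of the semidirect product, whose kernel is the normal factor. So the kernel of the
retraction is the free product of the conjugates `q K q⁻¹` and has index `|Q|`. For `Q = ℤ/n`
the conjugates are `sʲ K s⁻ʲ`, `0 ≤ j < n`.
-/

open Monoid

namespace Monoid.CoprodI

variable {K : Type*} [Monoid K] {ι ι' ι'' : Type*}

def mapIndex (f : ι → ι') : CoprodI (fun _ : ι => K) →* CoprodI (fun _ : ι' => K) :=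
  lift fun i => of (M := fun _ : ι' => K) (i := f i)

@[simp]
lemma mapIndex_of (f : ι → ι') (i : ι) (k : K) :
    mapIndex f (of (M := fun _ : ι => K) (i := i) k) = of (i := f i) k :=
  lift_of _ _

lemma mapIndex_id : mapIndex (K := K) (id : ι → ι) = .id _ :=
  ext_hom _ _ fun _ => by ext; simp

lemma mapIndex_comp (g : ι' → ι'') (f : ι → ι') :
    mapIndex (K := K) (g ∘ f) = (mapIndex g).comp (mapIndex f) :=
  ext_hom _ _ fun _ => by ext; simp

def reindex (e : ι ≃ ι') : CoprodI (fun _ : ι => K) ≃* CoprodI (fun _ : ι' => K) :=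
  (mapIndex e).toMulEquiv (mapIndex e.symm)
    (by rw [← mapIndex_comp, e.symm_comp_self, mapIndex_id])
    (by rw [← mapIndex_comp, e.self_comp_symm, mapIndex_id])

@[simp]
lemma reindex_apply (e : ι ≃ ι') (x : CoprodI (fun _ : ι => K)) : reindex e x = mapIndex e x :=
  rfl

def permAut : Equiv.Perm ι →* MulAut (CoprodI fun _ : ι => K) where
  toFun := reindex
  map_one' := MulEquiv.ext fun x => by simp [Equiv.Perm.coe_one, mapIndex_id]
  map_mul' e f := MulEquiv.ext fun x => by simp [Equiv.Perm.coe_mul, mapIndex_comp]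

def shiftAut (Q : Type*) [Group Q] : Q →* MulAut (CoprodI fun _ : Q => K) :=
  permAut.comp (MulAction.toPermHom Q Q)

@[simp]
lemma shiftAut_of {Q : Type*} [Group Q] (q p : Q) (k : K) :
    shiftAut Q q (of (M := fun _ : Q => K) (i := p) k) = of (i := q * p) k :=
  mapIndex_of _ _ _

theorem range_lift_conj_pow {K G : Type*} [Group K] [Group G] (s : G) (f : K →* G) (n : ℕ) :
    (lift fun j : Fin n => (MulAut.conj (s ^ (j : ℕ))).toMonoidHom.comp f).range =
      Subgroup.closure {x | ∃ j < n, ∃ k, x = s ^ j * f k * (s ^ j)⁻¹} := by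
  rw [range_eq_iSup, Subgroup.iSup_eq_closure]
  congr 1
  ext x
  simp only [Set.mem_iUnion, SetLike.mem_coe, MonoidHom.mem_range, MonoidHom.comp_apply,
    MulEquiv.coe_toMonoidHom, MulAut.conj_apply, Fin.exists_iff, Set.mem_ofPred_eq]
  exact exists_congr fun j =>
    exists_prop.trans <| and_congr_right fun _ => exists_congr fun k => eq_comm

end Monoid.CoprodI

namespace Monoid.Coprod

variable {K Q : Type*} [Group K] [Group Q]

def conjInl : CoprodI (fun _ : Q => K) →* K ∗ Q :=
  CoprodI.lift fun q => (MulAut.conj (inr q : K ∗ Q)).toMonoidHom.comp inl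

@[simp]
lemma conjInl_of (q : Q) (k : K) :
    conjInl (CoprodI.of (M := fun _ : Q => K) (i := q) k) = inr q * inl k * (inr q)⁻¹ :=
  CoprodI.lift_of _ _

lemma conjInl_comp_shiftAut (q : Q) :
    conjInl.comp (CoprodI.shiftAut Q q).toMonoidHom =
      (MulAut.conj (inr q : K ∗ Q)).toMonoidHom.comp conjInl :=
  CoprodI.ext_hom _ _ fun p => by ext k; simp [mul_assoc]

def toSemidirect : K ∗ Q →* CoprodI (fun _ : Q => K) ⋊[CoprodI.shiftAut Q] Q :=
  lift (SemidirectProduct.inl.comp (CoprodI.of (M := fun _ : Q => K) (i := 1)))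
    SemidirectProduct.inr

def ofSemidirect : CoprodI (fun _ : Q => K) ⋊[CoprodI.shiftAut Q] Q →* K ∗ Q :=
  SemidirectProduct.lift conjInl inr conjInl_comp_shiftAut

lemma ofSemidirect_comp_toSemidirect :
    (ofSemidirect (K := K) (Q := Q)).comp toSemidirect = .id _ :=
  hom_ext (by ext k; simp [toSemidirect, ofSemidirect])
    (by ext q; simp [toSemidirect, ofSemidirect])

lemma toSemidirect_injective : Function.Injective (toSemidirect (K := K) (Q := Q)) :=
  Function.LeftInverse.injective (g := ofSemidirect)
    (DFunLike.congr_fun ofSemidirect_comp_toSemidirect)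

lemma toSemidirect_comp_conjInl :
    (toSemidirect (K := K) (Q := Q)).comp conjInl = SemidirectProduct.inl := by
  refine CoprodI.ext_hom _ _ fun q => ?_
  ext k <;> simp [toSemidirect]

lemma rightHom_comp_toSemidirect :
    SemidirectProduct.rightHom.comp (toSemidirect (K := K) (Q := Q)) = snd :=
  hom_ext (by ext; simp [toSemidirect]) (by ext; simp [toSemidirect])

theorem conjInl_injective : Function.Injective (conjInl (K := K) (Q := Q)) := by
  intro x y hxy
  apply SemidirectProduct.inl_injective (φ := CoprodI.shiftAut Q)
  simpa [← toSemidirect_comp_conjInl] using congrArg toSemidirect hxy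

theorem range_conjInl : (conjInl (K := K) (Q := Q)).range = (snd : K ∗ Q →* Q).ker := by
  ext x
  rw [MonoidHom.mem_ker, ← rightHom_comp_toSemidirect, MonoidHom.comp_apply,
    ← MonoidHom.mem_ker, ← SemidirectProduct.range_inl_eq_ker_rightHom,
    ← toSemidirect_comp_conjInl, MonoidHom.range_comp,
    Subgroup.mem_map_iff_mem toSemidirect_injective]

theorem index_ker_snd : (snd : K ∗ Q →* Q).ker.index = Nat.card Q := by
  rw [Subgroup.index_ker, MonoidHom.range_eq_top.2 snd_surjective, Subgroup.card_top]

end Monoid.Coprod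

lemma ZMod.finEquiv_apply {n : ℕ} [NeZero n] (j : Fin n) : ZMod.finEquiv n j = (j : ℕ) := by
  obtain ⟨m, rfl⟩ : ∃ m, n = m + 1 := Nat.exists_eq_succ_of_ne_zero (NeZero.ne n)
  exact (Fin.cast_val_eq_self j).symm

/-- Let `G = K ∗ ℤ/n` with `s` the generator of the `ℤ/n` factor and `H`
the kernel of the retraction `G → ℤ/n`.  Then `H` has index `n`, is generated by the
conjugates `sʲ K s⁻ʲ` (`j = 0, …, n-1`), and the natural map from the `n`-fold free
product `K ∗ ⋯ ∗ K` sending the `j`-th factor to `sʲ K s⁻ʲ` is an isomorphism onto `H`. -/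
theorem stmt11 {K : Type*} [Group K] (n : ℕ) (hn : 1 ≤ n)
    (s : Coprod K (Multiplicative (ZMod n)))
    (hs : s = Coprod.inr (Multiplicative.ofAdd (1 : ZMod n)))
    (r : Coprod K (Multiplicative (ZMod n)) →* Multiplicative (ZMod n))
    (hr : r = Coprod.lift 1 (MonoidHom.id (Multiplicative (ZMod n))))
    (H : Subgroup (Coprod K (Multiplicative (ZMod n)))) (hH : H = r.ker)
    (φ : CoprodI (fun _ : Fin n => K) →* Coprod K (Multiplicative (ZMod n)))
    (hφ : φ = CoprodI.lift (fun j : Fin n =>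
      (MulAut.conj (s ^ (j : ℕ))).toMonoidHom.comp Coprod.inl)) :
    H.index = n ∧
    H = Subgroup.closure
      {x | ∃ j < n, ∃ k : K, x = s ^ j * Coprod.inl k * (s ^ j)⁻¹} ∧
    Function.Injective φ ∧ φ.range = H := by
  have : NeZero n := ⟨by omega⟩
  replace hH : H = (Coprod.snd : Coprod K (Multiplicative (ZMod n)) →* _).ker := by
    rw [hH, hr]; rfl
  let e : Fin n ≃ Multiplicative (ZMod n) := (ZMod.finEquiv n).toEquiv.trans Multiplicative.ofAdd
  have hφ_reindex : φ = Coprod.conjInl.comp (CoprodI.reindex e).toMonoidHom := by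
    subst hφ hs
    refine CoprodI.ext_hom _ _ fun j => ?_
    ext k
    simp [e, ZMod.finEquiv_apply, ← map_pow, ← ofAdd_nsmul]
  have hrange : φ.range = H := by
    rw [hφ_reindex, MonoidHom.range_comp, MonoidHom.range_eq_top.2 (CoprodI.reindex e).surjective,
      ← MonoidHom.range_eq_map, Coprod.range_conjInl, hH]
  refine ⟨?_, ?_, ?_, hrange⟩
  · rw [hH, Coprod.index_ker_snd, ← Nat.card_congr e, Nat.card_fin]
  · rw [← hrange, hφ, CoprodI.range_lift_conj_pow]
  · rw [hφ_reindex]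
    exact Coprod.conjInl_injective.comp (CoprodI.reindex e).injective
end

section
/- Let F be the free group on a₁, …, a_g with g ≥ 2. Then the subgroup of F generated by w = a₁²a₂²⋯a_g² and w' = a₁⁻¹wa₁ is free of rank 2; i.e., w and w' freely generate a free subgroup. -/
/-!
Ping-pong on reduced words. Let `L = g - 1`; the reduced words of `w` and `w'` are
`a₀ a₀ a₁ a₁ ⋯ a_L a_L` and `a₀ a₁ a₁ ⋯ a_L a_L a₀`, of length `2g ≥ 4`. If the reduced word of `u`
does not begin with the inverse of the last two letters of `c`, at most one letter cancels in
`c * u`, so `c * u` begins with the first two letters of `c`. Taking for `c` the elements `w`, `w'`,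
`w⁻¹`, `w'⁻¹` gives four pairwise distinct two-letter prefixes `a₀a₀`, `a₀a₁`, `a_L⁻¹a_L⁻¹`,
`a₀⁻¹a_L⁻¹`, and the sets of elements with these prefixes are ping-pong sets for `w` and `w'`.
-/

open Pointwise

universe u

theorem List.exists_eq_append_append_of_prefix_of_suffix {α : Type*} {l p q : List α}
    (hp : p <+: l) (hq : q <:+ l) (hlen : p.length + q.length ≤ l.length) :
    ∃ m, l = p ++ m ++ q := by
  obtain ⟨r, rfl⟩ := hp
  obtain ⟨m, rfl⟩ : q <:+ r :=
    List.suffix_of_suffix_length_le hq (List.suffix_append p r) (by simpa using hlen)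
  exact ⟨m, by simp⟩

namespace FreeGroup

variable {α : Type u}

theorem isReduced_of_forall_snd_eq {L : List (α × Bool)} (b : Bool) (h : ∀ x ∈ L, x.2 = b) :
    IsReduced L :=
  List.Pairwise.isChain <| List.pairwise_of_forall_mem_list fun x hx y hy _ => by
    rw [h x hx, h y hy]

variable [DecidableEq α]

def cylinder (l : List (α × Bool)) : Set (FreeGroup α) := {x | l <+: x.toWord}

theorem cylinder_anti {l l' : List (α × Bool)} (h : l <+: l') : cylinder l' ⊆ cylinder l :=
  fun _ hx => h.trans hx

theorem disjoint_cylinder {l l' : List (α × Bool)} (hlen : l.length = l'.length) (hne : l ≠ l') :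
    Disjoint (cylinder l) (cylinder l') :=
  Set.disjoint_left.2 fun _ h h' =>
    hne <| (List.prefix_of_prefix_length_le h h' hlen.le).eq_of_length hlen

/-- Either `t` cancels all of `q` but its first letter `z`, which then survives, or induction on
`q` applies to `s ++ [z]`. -/
theorem isPrefix_reduce_append {s q t : List (α × Bool)} (hsq : IsReduced (s ++ q))
    (ht : IsReduced t) (hqt : ¬ invRev q <+: t) : s <+: reduce (s ++ q ++ t) := by
  induction q generalizing s with
  | nil => exact absurd t.nil_prefix hqt
  | cons z q ih =>
    by_cases hq : invRev q <+: t
    · obtain ⟨t', rfl⟩ := hq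
      have hz : ¬ [(z.1, !z.2)] <+: t' := by
        simpa [invRev_cons, invRev] using hqt
      have hcancel : mk (s ++ z :: q ++ (invRev q ++ t')) = mk (s ++ [z] ++ t') := by
        rw [show s ++ z :: q ++ (invRev q ++ t') = s ++ [z] ++ q ++ invRev q ++ t' by simp,
          ← mul_mk, ← mul_mk, ← mul_mk, ← inv_mk, mul_inv_cancel_right, mul_mk]
      have hred : IsReduced (s ++ [z] ++ t') := by
        refine IsReduced.append_overlap (by simpa using hsq.infix ⟨[], q, by simp⟩) ?_ (by simp)
        have ht' : IsReduced t' := ht.infix (List.suffix_append _ _).isInfix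
        rcases t' with _ | ⟨y, t'⟩
        · exact IsReduced.singleton
        refine isReduced_cons_cons.2 ⟨fun h1 => ?_, ht'⟩
        by_contra h2
        exact hz (by simp [Prod.ext_iff, h1, Bool.eq_not_of_ne (Ne.symm h2)])
      rw [reduce.sound hcancel, hred.reduce_eq, List.append_assoc]
      exact List.prefix_append _ _
    · simpa using (List.prefix_append s [z]).trans (ih (s := s ++ [z]) (by simpa using hsq) hq)

theorem isPrefix_toWord_mul {c u : FreeGroup α} {s q : List (α × Bool)} (hc : c.toWord = s ++ q)
    (hu : ¬ invRev q <+: u.toWord) : s <+: (c * u).toWord := by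
  rw [toWord_mul, hc]
  exact isPrefix_reduce_append (hc ▸ isReduced_toWord) isReduced_toWord hu

theorem smul_compl_cylinder_subset {c : FreeGroup α} {s q : List (α × Bool)}
    (hc : c.toWord = s ++ q) : c • (cylinder (invRev q))ᶜ ⊆ cylinder s := by
  rintro _ ⟨u, hu, rfl⟩
  exact isPrefix_toWord_mul hc hu

/-- Ping-pong with the cylinders of the first `n` letters of each `a i` and of the inverse of
its last `n` letters. -/
theorem injective_lift_of_cylinders {ι : Type u} [Nontrivial ι] {a : ι → FreeGroup α} {n : ℕ}
    {p q : ι → List (α × Bool)} (hp : ∀ i, (p i).length = n) (hq : ∀ i, (q i).length = n)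
    (hpa : ∀ i, p i <+: (a i).toWord) (hqa : ∀ i, q i <:+ (a i).toWord)
    (hlen : ∀ i, 2 * n ≤ (a i).toWord.length) (hp_inj : Function.Injective p)
    (hq_inj : Function.Injective q) (hpq : ∀ i j, p i ≠ invRev (q j)) :
    Function.Injective (lift a) := by
  have ha i : ∃ m, (a i).toWord = p i ++ m ++ q i :=
    List.exists_eq_append_append_of_prefix_of_suffix (hpa i) (hqa i) (by grind)
  refine injective_lift_of_ping_pong a (fun i => cylinder (p i)) (fun i => cylinder (invRev (q i)))
    (fun i => ⟨a i, hpa i⟩) (fun i j hij => disjoint_cylinder (by rw [hp, hp]) (hp_inj.ne hij))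
    (fun i j hij => disjoint_cylinder (by rw [invRev_length, invRev_length, hq, hq])
      ((invRev_injective.comp hq_inj).ne hij))
    (fun i j => disjoint_cylinder (by rw [invRev_length, hp, hq]) (hpq i j))
    (fun i => ?_) (fun i => ?_)
  · obtain ⟨m, hm⟩ := ha i
    exact (smul_compl_cylinder_subset hm).trans (cylinder_anti (List.prefix_append _ _))
  · obtain ⟨m, hm⟩ := ha i
    have hinv : (a i)⁻¹.toWord = invRev (q i) ++ invRev m ++ invRev (p i) := by
      simp [toWord_inv, hm, invRev_append]
    simpa [invRev_invRev] using
      (smul_compl_cylinder_subset hinv).trans (cylinder_anti (List.prefix_append _ _))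

theorem toWord_prod_map_of_mul_of (l : List α) :
    (l.map fun i => of i * of i).prod.toWord = l.flatMap fun i => [(i, true), (i, true)] := by
  have hmk :
      (l.map fun i => of i * of i).prod = mk (l.flatMap fun i => [(i, true), (i, true)]) := by
    induction l with
    | nil => rfl
    | cons i l ih => rw [List.map_cons, List.prod_cons, ih, of, mul_mk, mul_mk]; rfl
  rw [hmk, toWord_mk, (isReduced_of_forall_snd_eq true _).reduce_eq]
  simp

theorem toWord_of_inv_mul_mul_of {x : FreeGroup α} {a : α} {V : List (α × Bool)}
    (hx : x.toWord = (a, true) :: V) (hpos : ∀ y ∈ x.toWord, y.2 = true) :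
    ((of a)⁻¹ * x * of a).toWord = V ++ [(a, true)] := by
  have hx' : x = of a * mk V := by rw [← mk_toWord (x := x), hx]; rfl
  have hred : IsReduced (V ++ [(a, true)]) :=
    isReduced_of_forall_snd_eq true (by simpa [hx] using hpos)
  rw [hx', inv_mul_cancel_left, of, mul_mk, toWord_mk, hred.reduce_eq]

end FreeGroup

theorem isSuffix_flatMap_finRange (k : ℕ) :
    [(Fin.last (k + 1), true), (Fin.last (k + 1), true)] <:+
      (List.finRange (k + 2)).flatMap fun i => [(i, true), (i, true)] := by
  rw [List.finRange_succ_last]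
  simp [List.flatMap_append]

theorem exists_flatMap_finRange_eq (k : ℕ) :
    ∃ r, (List.finRange (k + 2)).flatMap (fun i => [(i, true), (i, true)]) =
      [(0, true), (0, true), (1, true)] ++ (r ++ [(Fin.last (k + 1), true)]) := by
  obtain ⟨r, hr⟩ : [(0, true), (0, true), (1, true)] <+:
      (List.finRange (k + 2)).flatMap fun i => [(i, true), (i, true)] := by
    simp [List.finRange_succ]
  have hr_len : 1 ≤ r.length := by
    have := congrArg List.length hr
    simp at this
    omega
  obtain ⟨r, rfl⟩ : [(Fin.last (k + 1), true)] <:+ r :=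
    List.suffix_of_suffix_length_le ((List.suffix_append [_] _).trans (isSuffix_flatMap_finRange k))
      (hr ▸ List.suffix_append _ _) hr_len
  exact ⟨r, hr.symm⟩

open FreeGroup

/-- In the free group `F` on `a₁, …, a_g` (`g ≥ 2`), the elements
`w = a₁² ⋯ a_g²` and `w' = a₁⁻¹ w a₁` freely generate a free subgroup of rank 2, i.e. the
homomorphism from the free group of rank 2 with `0 ↦ w`, `1 ↦ w'` is injective. -/
theorem stmt18 (g : ℕ) (hg : 2 ≤ g)
    (w : FreeGroup (Fin g))
    (hw : w = ((List.finRange g).map (fun i => FreeGroup.of i * FreeGroup.of i)).prod)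
    (w' : FreeGroup (Fin g))
    (hw' : w' = (FreeGroup.of (⟨0, by omega⟩ : Fin g))⁻¹ * w * FreeGroup.of ⟨0, by omega⟩) :
    Function.Injective
      (FreeGroup.lift (fun i : Fin 2 => if i = 0 then w else w') :
        FreeGroup (Fin 2) →* FreeGroup (Fin g)) := by
  obtain ⟨k, rfl⟩ := Nat.exists_eq_add_of_le' hg
  set L := Fin.last (k + 1)
  have hwW := toWord_prod_map_of_mul_of (List.finRange (k + 2))
  rw [← hw] at hwW
  have hwpos : ∀ x ∈ w.toWord, x.2 = true := by simp [hwW]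
  have hsuf : [(L, true), (L, true)] <:+ w.toWord := hwW ▸ isSuffix_flatMap_finRange k
  obtain ⟨r, hr⟩ := exists_flatMap_finRange_eq k
  rw [hr] at hwW
  have hw'W : w'.toWord = (0, true) :: (1, true) :: r ++ [(L, true), (0, true)] := by
    rw [hw', Fin.zero_eta, toWord_of_inv_mul_mul_of hwW hwpos]
    simp [L]
  refine injective_lift_of_cylinders (n := 2)
    (p := ![[(0, true), (0, true)], [(0, true), (1, true)]])
    (q := ![[(L, true), (L, true)], [(L, true), (0, true)]])
    (Fin.forall_fin_two.2 ⟨rfl, rfl⟩) (Fin.forall_fin_two.2 ⟨rfl, rfl⟩) ?_ ?_ ?_ ?_ ?_ ?_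
  · simp [Fin.forall_fin_two, hwW, hw'W]
  · refine Fin.forall_fin_two.2 ⟨by simpa using hsuf, ?_⟩
    simpa [hw'W] using List.suffix_append ((0, true) :: (1, true) :: r) [(L, true), (0, true)]
  · simp [Fin.forall_fin_two, hwW, hw'W]
  · intro i j; fin_cases i <;> fin_cases j <;> simp
  · intro i j; fin_cases i <;> fin_cases j <;> simp [L]
  · simp [Fin.forall_fin_two, invRev]
end

section
/- Let F₂ = ⟨a, b⟩, let k, n ≥ 2, and let H = ker(F₂ → Z/(kn), a ↦ n, b ↦ 1). For t = 0, …, n−1, let w_t = b⁻ᵗ(aᵏbⁿ)ᵏbᵗ (the complete lift of w = aᵏbⁿ to H with respect to the representatives bᵗ). Then the subgroup K = ⟨w₀, w₁, …, w_{n−1}⟩ ≤ H is free of rank n, freely generated by w₀, …, w_{n−1}. -/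
/-!
Let `F₂` act on `Fₙ × ℤ/(kn) × ℤ/k`: `b` adds `1` to the middle coordinate, and `a` adds
`(n, 1)` to the last two, first multiplying the `Fₙ`-coordinate on the left by the generator
`x_p` when the state is `(·, p, 0)` with `0 ≤ p < n`. The middle coordinate is the image of the
word in `ℤ/(kn)` and the last one its `a`-exponent mod `k`, so along `w_t` exactly one letter
multiplies, and `w_t` sends `(g, 0, 0)` to `(x_t g, 0, 0)`. Hence the image of `h ∈ Fₙ` under
`x_t ↦ w_t` sends `(1, 0, 0)` to `(h, 0, 0)`, so the map is injective.
-/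

open Function

theorem FreeGroup.injective_lift_of_equivariant {ι G X : Type*} [Group G] (w : ι → G)
    (ρ : G →* Equiv.Perm X) (e : FreeGroup ι → X) (he : Injective e)
    (hw : ∀ i g, ρ (w i) (e g) = e (of i * g)) : Injective (lift w) := by
  have equivariant : ∀ h g, ρ (lift w h) (e g) = e (h * g) := by
    intro h
    induction h using FreeGroup.induction_on with
    | C1 => simp
    | of i => simpa using hw i
    | inv_of i _ =>
      intro g
      rw [_root_.map_inv, _root_.map_inv, lift_apply_of, Equiv.Perm.inv_eq_iff_eq, hw,
        mul_inv_cancel_left]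
    | mul x y hx hy =>
      intro g
      rw [_root_.map_mul, _root_.map_mul, Equiv.Perm.mul_apply, hy, hx, mul_assoc]
  rw [injective_iff_map_eq_one]
  intro h hh
  simpa using he (by simpa [hh] using (equivariant h 1).symm)

theorem Equiv.Perm.pow_apply_of_forall_lt {Y : Type*} (σ : Equiv.Perm Y) (y : ℕ → Y) (m : ℕ)
    (h : ∀ i < m, σ (y i) = y (i + 1)) : (σ ^ m) (y 0) = y m := by
  induction m with
  | zero => rfl
  | succ m ih =>
    rw [pow_succ', Equiv.Perm.mul_apply, ih fun i hi => h i (by omega), h m m.lt_succ_self]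

theorem Equiv.Perm.pow_apply_of_mul_once {G X : Type*} [Group G] (σ : Equiv.Perm (G × X))
    (x : ℕ → X) (u : G) {j m : ℕ} (hjm : j < m) (hj : ∀ g, σ (g, x j) = (u * g, x (j + 1)))
    (hi : ∀ i < m, i ≠ j → ∀ g, σ (g, x i) = (g, x (i + 1))) (g : G) :
    (σ ^ m) (g, x 0) = (u * g, x m) := by
  have := σ.pow_apply_of_forall_lt (fun i => (if i ≤ j then g else u * g, x i)) m fun i him => by
    rcases lt_trichotomy i j with hij | rfl | hij
    · simp [hij.le, Nat.succ_le_of_lt hij, hi i him hij.ne]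
    · simp [hj]
    · simp [hij.not_ge, hi i him hij.ne', show ¬ i + 1 ≤ j by omega]
  simpa [hjm.not_ge] using this

section SkewShift

variable {G Q : Type*} [Group G] [AddGroup Q]

def skewShift (c : Q → G) (α : Q) : Equiv.Perm (G × Q) where
  toFun s := (c s.2 * s.1, s.2 + α)
  invFun s := ((c (s.2 - α))⁻¹ * s.1, s.2 - α)
  left_inv s := by simp
  right_inv s := by simp

theorem skewShift_apply (c : Q → G) (α : Q) (g : G) (x : Q) :
    skewShift c α (g, x) = (c x * g, x + α) := rfl

theorem skewShift_one_pow_apply (α : Q) (m : ℕ) (g : G) (x : Q) :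
    (skewShift 1 α ^ m) (g, x) = (g, x + m • α) := by
  simpa using (skewShift 1 α).pow_apply_of_forall_lt (fun i => (g, x + i • α)) m fun i _ => by
    simp [skewShift_apply, succ_nsmul, add_assoc]

end SkewShift

namespace CompleteLift

variable (k n : ℕ)

def label (x : ZMod (k * n) × ZMod k) : FreeGroup (Fin n) :=
  if h : x.2 = 0 ∧ x.1.val < n then FreeGroup.of ⟨x.1.val, h.2⟩ else 1

def permA : Equiv.Perm (FreeGroup (Fin n) × ZMod (k * n) × ZMod k) :=
  skewShift (label k n) ((n : ZMod (k * n)), 1)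

def permB : Equiv.Perm (FreeGroup (Fin n) × ZMod (k * n) × ZMod k) :=
  skewShift 1 (1, 0)

def action : FreeGroup (Fin 2) →* Equiv.Perm (FreeGroup (Fin n) × ZMod (k * n) × ZMod k) :=
  FreeGroup.lift ![permA k n, permB k n]

variable {k n}

theorem natCast_mul_natCast_eq_zero : (k : ZMod (k * n)) * n = 0 := by
  exact_mod_cast ZMod.natCast_self (k * n)

theorem label_of_ne_zero {x : ZMod (k * n) × ZMod k} (hx : x.2 ≠ 0) : label k n x = 1 :=
  dif_neg fun h => hx h.1

theorem label_add_mul {t i : ℕ} (ht : t < n) (hi : i < k) :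
    label k n ((t : ZMod (k * n)) + i * n, 0) = if i = 0 then .of ⟨t, ht⟩ else 1 := by
  have hval : ((t : ZMod (k * n)) + i * n).val = t + i * n := by
    exact_mod_cast ZMod.val_natCast_of_lt (show t + i * n < k * n by nlinarith)
  simp only [label, hval, true_and]
  rcases Nat.eq_zero_or_pos i with rfl | hi0
  · simp [ht]
  · have : ¬ t + i * n < n := by nlinarith
    simp [this, hi0.ne']

theorem permB_pow_apply (m : ℕ) (g : FreeGroup (Fin n)) (p : ZMod (k * n)) :
    (permB k n ^ m) (g, p, 0) = (g, p + m, 0) := by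
  simp [permB, skewShift_one_pow_apply]

theorem permA_pow_apply (hk : 0 < k) (g : FreeGroup (Fin n)) (p : ZMod (k * n)) :
    (permA k n ^ k) (g, p, 0) = (label k n (p, 0) * g, p, 0) := by
  have := (permA k n).pow_apply_of_mul_once (fun i => (p + i * n, (i : ZMod k)))
    (label k n (p, 0)) hk (fun g => by simp [permA, skewShift_apply]) (fun i hi hi0 g => by
      rw [permA, skewShift_apply, label_of_ne_zero]
      · simp only [Prod.mk_add_mk, one_mul, Nat.cast_add, Nat.cast_one]
        ring_nf
      · simpa [ZMod.natCast_eq_zero_iff] using Nat.not_dvd_of_pos_of_lt (by omega) hi) g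
  simpa [natCast_mul_natCast_eq_zero] using this

theorem permA_pow_mul_permB_pow_pow_apply (hk : 0 < k) {t : ℕ} (ht : t < n)
    (g : FreeGroup (Fin n)) :
    ((permA k n ^ k * permB k n ^ n) ^ k) (g, (t : ZMod (k * n)), (0 : ZMod k)) =
      (.of ⟨t, ht⟩ * g, (t : ZMod (k * n)), (0 : ZMod k)) := by
  set x : ℕ → ZMod (k * n) × ZMod k := fun i => ((t : ZMod (k * n)) + i * n, 0)
  have step : ∀ i g, (permA k n ^ k * permB k n ^ n) (g, x i) =
      (label k n (x (i + 1)) * g, x (i + 1)) := by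
    intro i g
    rw [Equiv.Perm.mul_apply, permB_pow_apply, permA_pow_apply hk]
    simp only [x]
    push_cast
    ring_nf
  have hx : x k = x 0 := by simp [x, natCast_mul_natCast_eq_zero]
  have := (permA k n ^ k * permB k n ^ n).pow_apply_of_mul_once x (.of ⟨t, ht⟩)
    (Nat.sub_lt hk one_pos)
    (fun g => by rw [step, show k - 1 + 1 = k by omega, hx, label_add_mul ht hk, if_pos rfl])
    (fun i hi hik g => by rw [step, label_add_mul ht (by omega), if_neg (by omega), one_mul]) g
  simpa [hx, x] using this

theorem action_conj_apply (hk : 0 < k) (t : Fin n) (g : FreeGroup (Fin n)) :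
    action k n (.of 1 ^ (-(t : ℤ)) * (.of 0 ^ k * .of 1 ^ n) ^ k * .of 1 ^ (t : ℤ)) (g, 0, 0) =
      (.of t * g, 0, 0) := by
  have hB : ∀ g', (permB k n ^ (t : ℕ)) (g', 0, 0) = (g', ((t : ℕ) : ZMod (k * n)), (0 : ZMod k)) :=
    fun g' => by simpa using permB_pow_apply (t : ℕ) g' 0
  simp only [action, map_mul, map_zpow, map_pow, FreeGroup.lift_apply_of, Matrix.cons_val_zero,
    Matrix.cons_val_one]
  rw [show ((t : ℤ)) = ((t : ℕ) : ℤ) from rfl, zpow_neg, zpow_natCast, Equiv.Perm.mul_apply,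
    Equiv.Perm.mul_apply, hB, permA_pow_mul_permB_pow_pow_apply hk t.isLt,
    Equiv.Perm.inv_eq_iff_eq, hB]

end CompleteLift

theorem stmt19_general (k n : ℕ) (hk : 2 ≤ k)
    (a b : FreeGroup (Fin 2)) (ha : a = FreeGroup.of 0) (hb : b = FreeGroup.of 1)
    (f : FreeGroup (Fin 2) →* Multiplicative (ZMod (k * n)))
    (hf : f = FreeGroup.lift (fun i : Fin 2 =>
      if i = 0 then Multiplicative.ofAdd ((n : ZMod (k * n)))
      else Multiplicative.ofAdd ((1 : ZMod (k * n)))))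
    (H : Subgroup (FreeGroup (Fin 2))) (hH : H = f.ker)
    (wt : Fin n → FreeGroup (Fin 2))
    (hwt : ∀ t : Fin n, wt t = b ^ (-(t : ℤ)) * (a ^ k * b ^ n) ^ k * b ^ (t : ℤ)) :
    (∀ t : Fin n, wt t ∈ H) ∧
    Function.Injective
      (FreeGroup.lift wt : FreeGroup (Fin n) →* FreeGroup (Fin 2)) := by
  subst ha hb hf hH
  refine ⟨fun t => ?_, ?_⟩
  · rw [MonoidHom.mem_ker, hwt]
    apply Multiplicative.toAdd.injective
    simp only [Fin.isValue, zpow_neg, zpow_natCast, map_mul, map_inv, map_pow,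
      FreeGroup.lift_apply_of, one_ne_zero, ↓reduceIte, inv_mul_cancel_comm, toAdd_pow, toAdd_mul,
      toAdd_ofAdd, nsmul_eq_mul, mul_one, smul_add, toAdd_one]
    linear_combination ((k : ZMod (k * n)) + 1) * CompleteLift.natCast_mul_natCast_eq_zero
  · refine FreeGroup.injective_lift_of_equivariant wt (CompleteLift.action k n)
      (fun g => (g, 0, 0)) (fun g h e => congrArg Prod.fst e) fun t g => ?_
    rw [hwt]
    exact CompleteLift.action_conj_apply (by omega) t g

/-- With `H = ker(F₂ → ℤ/(kn), a ↦ n, b ↦ 1)` (`k, n ≥ 2`) and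
`w_t = b⁻ᵗ (aᵏbⁿ)ᵏ bᵗ` for `t = 0, …, n-1`, the subgroup `K = ⟨w₀, …, w_{n-1}⟩ ≤ H` is
free of rank `n`, freely generated by `w₀, …, w_{n-1}`. -/
theorem stmt19 (k n : ℕ) (hk : 2 ≤ k) (hn : 2 ≤ n)
    (a b : FreeGroup (Fin 2)) (ha : a = FreeGroup.of 0) (hb : b = FreeGroup.of 1)
    (f : FreeGroup (Fin 2) →* Multiplicative (ZMod (k * n)))
    (hf : f = FreeGroup.lift (fun i : Fin 2 =>
      if i = 0 then Multiplicative.ofAdd ((n : ZMod (k * n)))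
      else Multiplicative.ofAdd ((1 : ZMod (k * n)))))
    (H : Subgroup (FreeGroup (Fin 2))) (hH : H = f.ker)
    (wt : Fin n → FreeGroup (Fin 2))
    (hwt : ∀ t : Fin n, wt t = b ^ (-(t : ℤ)) * (a ^ k * b ^ n) ^ k * b ^ (t : ℤ)) :
    (∀ t : Fin n, wt t ∈ H) ∧
    Function.Injective
      (FreeGroup.lift wt : FreeGroup (Fin n) →* FreeGroup (Fin 2)) :=
  stmt19_general k n hk a b ha hb f hf H hH wt hwt
end
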